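/- Let p be a prime and r ≥ 1 with q = p^r ≥ 3, and let G = F ⋊ Fˣ be the semidirect product of the additive group of F = GaloisField p r by its unit group Fˣ acting by multiplication. Then the Terwilliger algebra T(G) is isomorphic as a ℂ-algebra to the product (Matrix (Fin q) (Fin q) ℂ) × (Fin (q−1) → ℂ); that is, T(G) decomposes as the direct sum of a primary Wedderburn component of dimension q² and exactly q−1 one-dimensional Wedderburn components. -/

import Mathlib

open scoped Classical Pointwise

/-- The conjugacy class of `x` in `G`. -/
def conjClass {G : Type*} [Group G] (x : G) : Set G := {y | ∃ g : G, g * x * g⁻¹ = y}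

/-- The adjacency matrix of a subset `C` of `G`. -/
noncomputable def adjMat (G : Type*) [Group G] (C : Set G) : Matrix G G ℂ :=
  Matrix.of fun x y => if y * x⁻¹ ∈ C then (1 : ℂ) else 0

/-- The dual idempotent of a subset `C` of `G` (base point the identity). -/
noncomputable def dualIdem (G : Type*) [Group G] (C : Set G) : Matrix G G ℂ :=
  Matrix.of fun x y => if x = y ∧ y ∈ C then (1 : ℂ) else 0

/-- The Terwilliger algebra of the group association scheme of `G`, with base point `e`. -/
noncomputable def TerwAlg (G : Type*) [Group G] [Fintype G] [DecidableEq G] : Subalgebra ℂ (Matrix G G ℂ) :=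
  Algebra.adjoin ℂ
    ((Set.range fun x : G => adjMat G (conjClass x)) ∪
     (Set.range fun x : G => dualIdem G (conjClass x)))

/-- A Camina group: a nonabelian group in which every conjugacy class outside the
commutator subgroup is a coset of the commutator subgroup. -/
def IsCamina (G : Type*) [Group G] : Prop :=
  (¬ ∀ a b : G, a * b = b * a) ∧
  ∀ x : G, x ∉ commutator G → conjClass x = x • (commutator G : Set G)

/-- The action of the unit group of a field on (the multiplicative version of) its
additive group, by multiplication. -/
noncomputable def frobAct (F : Type*) [Field F] : Fˣ →* MulAut (Multiplicative F) where
  toFun u := AddEquiv.toMultiplicative (DistribMulAction.toAddAut Fˣ F u)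
  map_one' := by ext x; simp [DistribMulAction.toAddAut]; rfl
  map_mul' u v := by ext x; simp [DistribMulAction.toAddAut, mul_smul]; rfl


/-- The Frobenius group `F ⋊ Fˣ` for `F` the field with `p ^ r` elements. -/
abbrev FrobGrp (p r : ℕ) [Fact p.Prime] : Type :=
  Multiplicative (GaloisField p r) ⋊[frobAct (GaloisField p r)] (GaloisField p r)ˣ

/-!
For any finite group `G`, the algebra `T(G)` preserves the class functions; its action in the
basis of class indicators is an algebra map onto the matrices indexed by conjugacy classes. The
rest of `ℂ^G` is the sum, over the classes `C`, of the functions supported on `C` with zero sum,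
which is nonzero exactly for noncentral `C`. Dual idempotents act on each of these spaces by a
scalar; when the adjacency matrices do as well, so does all of `T(G)`, and each noncentral class
gives a character of `T(G)`. The primary map and these characters together are injective since
`ℂ^G` is spanned by the spaces above, and surjective since products `E*_i A E*_1 A' E*_j` give
the matrix units with vanishing characters while `E*_C` separates the characters.

In `F ⋊ Fˣ` two elements other than `1` are conjugate iff they have the same component in `Fˣ`.
So every class lies in a fibre of the projection to `Fˣ`, which makes an adjacency matrix act on
zero-sum functions by `1`, `-1` or `0`; there are `|F|` classes, and for `|F| ≥ 3` all but `{1}`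
are noncentral.
-/

open Matrix

namespace Matrix

variable {n R : Type*} [Fintype n] [DecidableEq n] [CommSemiring R]

def ActsByScalarOn (t : Matrix n n R) (W : Set (n → R)) : Prop :=
  ∃ μ : R, ∀ w ∈ W, t *ᵥ w = μ • w

theorem actsByScalarOn_of_mem_adjoin {S : Set (Matrix n n R)} {W : Set (n → R)}
    (hS : ∀ s ∈ S, s.ActsByScalarOn W) {t : Matrix n n R} (ht : t ∈ Algebra.adjoin R S) :
    t.ActsByScalarOn W := by
  induction ht using Algebra.adjoin_induction with
  | mem s hs => exact hS s hs
  | algebraMap c =>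
    exact ⟨c, fun w _ => by rw [Algebra.algebraMap_eq_smul_one, smul_mulVec, one_mulVec]⟩
  | add s t _ _ hs ht =>
    obtain ⟨μ, hμ⟩ := hs
    obtain ⟨ν, hν⟩ := ht
    exact ⟨μ + ν, fun w hw => by rw [add_mulVec, hμ w hw, hν w hw, add_smul]⟩
  | mul s t _ _ hs ht =>
    obtain ⟨μ, hμ⟩ := hs
    obtain ⟨ν, hν⟩ := ht
    exact ⟨μ * ν, fun w hw => by
      rw [← mulVec_mulVec, hν w hw, mulVec_smul, hμ w hw, smul_smul, mul_comm]⟩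

theorem mulVec_mem_of_mem_adjoin {S : Set (Matrix n n R)} {W : Submodule R (n → R)}
    (hS : ∀ s ∈ S, ∀ w ∈ W, s *ᵥ w ∈ W) {t : Matrix n n R} (ht : t ∈ Algebra.adjoin R S) :
    ∀ w ∈ W, t *ᵥ w ∈ W := by
  induction ht using Algebra.adjoin_induction with
  | mem s hs => exact hS s hs
  | algebraMap c =>
    intro w hw
    rw [Algebra.algebraMap_eq_smul_one, smul_mulVec, one_mulVec]
    exact W.smul_mem c hw
  | add s t _ _ hs ht => exact fun w hw => add_mulVec s t w ▸ W.add_mem (hs w hw) (ht w hw)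
  | mul s t _ _ hs ht => exact fun w hw => mulVec_mulVec w s t ▸ hs _ (ht w hw)

end Matrix

section Terwilliger

variable {G : Type*} [Group G]

theorem mem_conjClass_iff {x y : G} :
    y ∈ conjClass x ↔ ConjClasses.mk y = ConjClasses.mk x := by
  rw [ConjClasses.mk_eq_mk_iff_isConj, isConj_comm, isConj_iff]
  rfl

theorem mk_conj (k a : G) : ConjClasses.mk (k * a * k⁻¹) = ConjClasses.mk a :=
  ConjClasses.mk_eq_mk_iff_isConj.mpr (isConj_iff.mpr ⟨k, rfl⟩).symm

noncomputable def classRep (c : ConjClasses G) : G := c.exists_rep.choose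

@[simp]
theorem mk_classRep (c : ConjClasses G) : ConjClasses.mk (classRep c) = c :=
  c.exists_rep.choose_spec

variable (G) in
def classFunctions : Submodule ℂ (G → ℂ) where
  carrier := {v | ∀ x y, IsConj x y → v x = v y}
  add_mem' hu hv x y h := by simp [hu x y h, hv x y h]
  zero_mem' _ _ _ := rfl
  smul_mem' c v hv x y h := by simp [hv x y h]

theorem one_notMem_noncenter : (1 : ConjClasses G) ∉ ConjClasses.noncenter G :=
  (ConjClasses.mk_bijOn G).mapsTo (Subgroup.one_mem _)

section Noncenter

variable (c : ConjClasses.noncenter G)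

noncomputable def basePt : G := Exists.choose (c.2 : c.1.carrier.Nontrivial)

noncomputable def otherPt : G :=
  Exists.choose (Exists.choose_spec (c.2 : c.1.carrier.Nontrivial)).2

theorem mk_basePt : ConjClasses.mk (basePt c) = c :=
  ConjClasses.mem_carrier_iff_mk_eq.mp (Exists.choose_spec (c.2 : c.1.carrier.Nontrivial)).1

theorem mk_otherPt : ConjClasses.mk (otherPt c) = c :=
  ConjClasses.mem_carrier_iff_mk_eq.mp
    (Exists.choose_spec (Exists.choose_spec (c.2 : c.1.carrier.Nontrivial)).2).1

theorem basePt_ne_otherPt : basePt c ≠ otherPt c :=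
  (Exists.choose_spec (Exists.choose_spec (c.2 : c.1.carrier.Nontrivial)).2).2

variable [DecidableEq G]

noncomputable def testVec : G → ℂ := Pi.single (basePt c) 1 - Pi.single (otherPt c) 1

theorem testVec_basePt : testVec c (basePt c) = 1 := by
  simp [testVec, basePt_ne_otherPt c]

end Noncenter

section ZeroSum

variable [Fintype G]

theorem adjMat_mulVec_apply (C : Set G) (v : G → ℂ) (x : G) :
    (adjMat G C *ᵥ v) x = ∑ y, if y * x⁻¹ ∈ C then v y else 0 := by
  simp [mulVec, dotProduct, adjMat, ite_mul]

def zeroSumOn (c : ConjClasses G) : Set (G → ℂ) :=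
  {w | (∀ g, ConjClasses.mk g ≠ c → w g = 0) ∧ ∑ g, w g = 0}

theorem eq_zero_of_mem_zeroSumOn {c : ConjClasses G} (hc : c ∉ ConjClasses.noncenter G)
    {w : G → ℂ} (hw : w ∈ zeroSumOn c) : w = 0 := by
  rw [ConjClasses.mem_noncenter, Set.not_nontrivial_iff] at hc
  funext x
  by_contra hx
  have hxc : ConjClasses.mk x = c := by_contra fun h => hx (hw.1 x h)
  have hsum : ∑ g, w g = w x := by
    refine Finset.sum_eq_single x (fun g _ hg => hw.1 g fun hgc => hg ?_) (by simp)
    exact hc (ConjClasses.mem_carrier_iff_mk_eq.mpr hgc) (ConjClasses.mem_carrier_iff_mk_eq.mpr hxc)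
  exact hx (hsum ▸ hw.2)

variable (G) in
def AdjMatActsByScalars : Prop :=
  ∀ (g : G) (c : ConjClasses G), (adjMat G (conjClass g)).ActsByScalarOn (zeroSumOn c)

end ZeroSum

variable [Fintype G] [DecidableEq G]

theorem dualIdem_mulVec_apply (C : Set G) (v : G → ℂ) (x : G) :
    (dualIdem G C *ᵥ v) x = if x ∈ C then v x else 0 := by
  simp [mulVec, dotProduct, dualIdem, ite_and]

theorem adjMat_mem_terwAlg (g : G) : adjMat G (conjClass g) ∈ TerwAlg G :=
  Algebra.subset_adjoin (Or.inl ⟨g, rfl⟩)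

theorem dualIdem_mem_terwAlg (g : G) : dualIdem G (conjClass g) ∈ TerwAlg G :=
  Algebra.subset_adjoin (Or.inr ⟨g, rfl⟩)

section Primary

def classIndicator (c : ConjClasses G) : G → ℂ :=
  fun g => if ConjClasses.mk g = c then 1 else 0

theorem classIndicator_classRep (i j : ConjClasses G) :
    classIndicator j (classRep i) = if i = j then 1 else 0 := by
  rw [classIndicator, mk_classRep]

theorem classIndicator_mem_classFunctions (c : ConjClasses G) :
    classIndicator c ∈ classFunctions G := by
  intro x y hxy
  simp only [classIndicator, ConjClasses.mk_eq_mk_iff_isConj.mpr hxy]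

theorem eq_sum_classIndicator {v : G → ℂ} (hv : v ∈ classFunctions G) :
    v = ∑ c, v (classRep c) • classIndicator c := by
  ext x
  simp only [Finset.sum_apply, Pi.smul_apply, classIndicator, smul_eq_mul, mul_ite, mul_one,
    mul_zero, Finset.sum_ite_eq, Finset.mem_univ, if_true]
  exact hv _ _ (ConjClasses.mk_eq_mk_iff_isConj.mp (mk_classRep _).symm)

theorem adjMat_conjClass_mulVec_mem (g : G) {v : G → ℂ} (hv : v ∈ classFunctions G) :
    adjMat G (conjClass g) *ᵥ v ∈ classFunctions G := by
  intro x y hxy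
  obtain ⟨k, rfl⟩ := isConj_iff.mp hxy
  simp only [adjMat_mulVec_apply]
  refine Fintype.sum_bijective (fun z => k * z * k⁻¹) (MulAut.conj k).bijective _ _ fun z => ?_
  have hz : k * z * k⁻¹ * (k * x * k⁻¹)⁻¹ = k * (z * x⁻¹) * k⁻¹ := by group
  rw [hz, hv (k * z * k⁻¹) z (isConj_iff.mpr ⟨k⁻¹, by group⟩)]
  simp only [mem_conjClass_iff, mk_conj]

theorem dualIdem_conjClass_mulVec_mem (g : G) {v : G → ℂ} (hv : v ∈ classFunctions G) :
    dualIdem G (conjClass g) *ᵥ v ∈ classFunctions G := by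
  intro x y hxy
  have hmk : ConjClasses.mk x = ConjClasses.mk y := ConjClasses.mk_eq_mk_iff_isConj.mpr hxy
  simp only [dualIdem_mulVec_apply, mem_conjClass_iff, hmk, hv x y hxy]

theorem mulVec_mem_classFunctions {t : Matrix G G ℂ} (ht : t ∈ TerwAlg G) :
    ∀ v ∈ classFunctions G, t *ᵥ v ∈ classFunctions G := by
  refine mulVec_mem_of_mem_adjoin ?_ ht
  rintro s (⟨g, rfl⟩ | ⟨g, rfl⟩)
  · exact fun v hv => adjMat_conjClass_mulVec_mem g hv
  · exact fun v hv => dualIdem_conjClass_mulVec_mem g hv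

variable (G) in
noncomputable def primaryMatrix :
    Matrix G G ℂ →ₗ[ℂ] Matrix (ConjClasses G) (ConjClasses G) ℂ where
  toFun t := Matrix.of fun i j => (t *ᵥ classIndicator j) (classRep i)
  map_add' s t := by ext; simp [add_mulVec]
  map_smul' c t := by ext; simp [smul_mulVec]

theorem primaryMatrix_apply (t : Matrix G G ℂ) (i j : ConjClasses G) :
    primaryMatrix G t i j = (t *ᵥ classIndicator j) (classRep i) := rfl

theorem mulVec_classIndicator {t : Matrix G G ℂ} (ht : t ∈ TerwAlg G) (j : ConjClasses G) :
    t *ᵥ classIndicator j = ∑ i, primaryMatrix G t i j • classIndicator i :=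
  eq_sum_classIndicator (mulVec_mem_classFunctions ht _ (classIndicator_mem_classFunctions j))

theorem primaryMatrix_mul (s : Matrix G G ℂ) {t : Matrix G G ℂ} (ht : t ∈ TerwAlg G) :
    primaryMatrix G (s * t) = primaryMatrix G s * primaryMatrix G t := by
  ext i j
  rw [primaryMatrix_apply, ← mulVec_mulVec, mulVec_classIndicator ht j, mulVec_sum, mul_apply,
    Finset.sum_apply]
  refine Finset.sum_congr rfl fun k _ => ?_
  rw [mulVec_smul, Pi.smul_apply, smul_eq_mul, mul_comm]
  rfl

theorem primaryMatrix_one : primaryMatrix G 1 = 1 := by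
  ext i j
  rw [primaryMatrix_apply, one_mulVec, classIndicator_classRep, one_apply]

variable (G) in
noncomputable def primaryHom : TerwAlg G →ₐ[ℂ] Matrix (ConjClasses G) (ConjClasses G) ℂ :=
  AlgHom.ofLinearMap (primaryMatrix G ∘ₗ (TerwAlg G).val.toLinearMap) primaryMatrix_one
    fun s t => primaryMatrix_mul s.1 t.2

theorem primaryMatrix_dualIdem (i : ConjClasses G) :
    primaryMatrix G (dualIdem G (conjClass (classRep i))) = single i i 1 := by
  ext i' j'
  rw [primaryMatrix_apply, dualIdem_mulVec_apply, mem_conjClass_iff, mk_classRep, mk_classRep,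
    classIndicator_classRep, single_apply]
  by_cases h : i' = i
  · simp [h]
  · simp [h, Ne.symm h]

theorem primaryMatrix_adjMat_ne_zero (i j : ConjClasses G) :
    primaryMatrix G (adjMat G (conjClass (classRep j * (classRep i)⁻¹))) i j ≠ 0 := by
  rw [primaryMatrix_apply, adjMat_mulVec_apply]
  simp only [classIndicator, ← ite_and, Finset.sum_boole, Nat.cast_ne_zero]
  exact Finset.card_ne_zero_of_mem (a := classRep j) (by simp [mem_conjClass_iff])

end Primary

section Characters

theorem dualIdem_actsByScalarOn (g : G) (c : ConjClasses G) :
    (dualIdem G (conjClass g)).ActsByScalarOn (zeroSumOn c) := by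
  refine ⟨if c = ConjClasses.mk g then 1 else 0, fun w hw => funext fun x => ?_⟩
  rw [dualIdem_mulVec_apply, mem_conjClass_iff, Pi.smul_apply, smul_eq_mul]
  by_cases hx : ConjClasses.mk x = c
  · subst hx
    split_ifs <;> simp
  · simp [hw.1 x hx]

theorem actsByScalarOn_zeroSumOn (hG : AdjMatActsByScalars G) {t : Matrix G G ℂ}
    (ht : t ∈ TerwAlg G) (c : ConjClasses G) : t.ActsByScalarOn (zeroSumOn c) := by
  refine actsByScalarOn_of_mem_adjoin ?_ ht
  rintro s (⟨g, rfl⟩ | ⟨g, rfl⟩)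
  exacts [hG g c, dualIdem_actsByScalarOn g c]

theorem single_sub_smul_classIndicator_mem_zeroSumOn (g : G) :
    Pi.single g 1 - (∑ h, classIndicator (ConjClasses.mk g) h)⁻¹ •
      classIndicator (ConjClasses.mk g) ∈ zeroSumOn (ConjClasses.mk g) := by
  have hcard : ∑ h, classIndicator (ConjClasses.mk g) h ≠ 0 := by
    simp only [classIndicator, Finset.sum_boole, Nat.cast_ne_zero]
    exact Finset.card_ne_zero_of_mem (a := g) (by simp)
  refine ⟨fun x hx => ?_, ?_⟩
  · have hxg : x ≠ g := fun h => hx (h ▸ rfl)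
    simp [classIndicator, hx, hxg]
  · simp [Finset.sum_sub_distrib, ← Finset.mul_sum, inv_mul_cancel₀ hcard]

variable (c : ConjClasses.noncenter G)

theorem testVec_mem_zeroSumOn : testVec c ∈ zeroSumOn c.1 := by
  refine ⟨fun x hx => ?_, by simp [testVec, Finset.sum_sub_distrib]⟩
  have h1 : x ≠ basePt c := fun h => hx (h ▸ mk_basePt c)
  have h2 : x ≠ otherPt c := fun h => hx (h ▸ mk_otherPt c)
  simp [testVec, h1, h2]

-- The scalar by which `t` acts on `zeroSumOn c`, when it acts by a scalar there.
noncomputable def eigenvalue : Matrix G G ℂ →ₗ[ℂ] ℂ where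
  toFun t := (t *ᵥ testVec c) (basePt c)
  map_add' s t := by simp [add_mulVec]
  map_smul' a t := by simp [smul_mulVec]

theorem eigenvalue_apply (t : Matrix G G ℂ) :
    eigenvalue c t = (t *ᵥ testVec c) (basePt c) := rfl

theorem mulVec_eq_eigenvalue_smul (hG : AdjMatActsByScalars G) {t : Matrix G G ℂ}
    (ht : t ∈ TerwAlg G) {w : G → ℂ} (hw : w ∈ zeroSumOn c.1) : t *ᵥ w = eigenvalue c t • w := by
  obtain ⟨μ, hμ⟩ := actsByScalarOn_zeroSumOn hG ht c
  rw [hμ w hw, eigenvalue_apply, hμ _ (testVec_mem_zeroSumOn c), Pi.smul_apply, testVec_basePt,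
    smul_eq_mul, mul_one]

theorem eigenvalue_dualIdem (i : ConjClasses G) :
    eigenvalue c (dualIdem G (conjClass (classRep i))) = if c.1 = i then 1 else 0 := by
  rw [eigenvalue_apply, dualIdem_mulVec_apply, mem_conjClass_iff, mk_basePt, mk_classRep,
    testVec_basePt]
  congr

noncomputable def characterHom (hG : AdjMatActsByScalars G) : TerwAlg G →ₐ[ℂ] ℂ :=
  AlgHom.ofLinearMap (eigenvalue c ∘ₗ (TerwAlg G).val.toLinearMap)
    (by
      change eigenvalue c 1 = 1
      rw [eigenvalue_apply, one_mulVec, testVec_basePt])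
    fun s t => by
      change eigenvalue c (s.1 * t.1) = eigenvalue c s.1 * eigenvalue c t.1
      rw [eigenvalue_apply, ← mulVec_mulVec,
        mulVec_eq_eigenvalue_smul c hG t.2 (testVec_mem_zeroSumOn c), mulVec_smul, Pi.smul_apply,
        smul_eq_mul, mul_comm]
      rfl

theorem eq_zero_of_primaryMatrix_eq_zero (hG : AdjMatActsByScalars G) {t : Matrix G G ℂ}
    (ht : t ∈ TerwAlg G) (h₁ : primaryMatrix G t = 0) (h₂ : ∀ c, eigenvalue c t = 0) : t = 0 := by
  ext x g
  set K := ConjClasses.mk g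
  set m := ∑ h, classIndicator K h
  set w := Pi.single g 1 - m⁻¹ • classIndicator K
  have hw : w ∈ zeroSumOn K := single_sub_smul_classIndicator_mem_zeroSumOn g
  have hind : t *ᵥ classIndicator K = 0 := by simp [mulVec_classIndicator ht, h₁]
  have hzero : t *ᵥ w = 0 := by
    by_cases hK : K ∈ ConjClasses.noncenter G
    · rw [mulVec_eq_eigenvalue_smul ⟨K, hK⟩ hG ht hw, h₂, zero_smul]
    · rw [eq_zero_of_mem_zeroSumOn hK hw, mulVec_zero]
  have hsplit : Pi.single g 1 = w + m⁻¹ • classIndicator K := by simp [w]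
  calc t x g = (t *ᵥ Pi.single g 1) x := by simp
    _ = 0 := by simp [hsplit, mulVec_add, mulVec_smul, hzero, hind]

end Characters

section Decomposition

variable (hG : AdjMatActsByScalars G)

noncomputable def terwilligerHom :
    TerwAlg G →ₐ[ℂ] Matrix (ConjClasses G) (ConjClasses G) ℂ × (ConjClasses.noncenter G → ℂ) :=
  (primaryHom G).prod (AlgHom.pi (characterHom · hG))

theorem terwilligerHom_injective : Function.Injective (terwilligerHom hG) := by
  rw [injective_iff_map_eq_zero]
  intro t ht
  exact Subtype.ext <| eq_zero_of_primaryMatrix_eq_zero hG t.2 (congrArg Prod.fst ht)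
    fun c => congrFun (congrArg Prod.snd ht) c

theorem terwilligerHom_dualIdem (i : ConjClasses G) :
    terwilligerHom hG ⟨_, dualIdem_mem_terwAlg (classRep i)⟩ =
      (single i i 1, fun c => if c.1 = i then 1 else 0) :=
  Prod.ext (primaryMatrix_dualIdem i) (funext fun c => eigenvalue_dualIdem c i)

theorem single_mem_range (i j : ConjClasses G) :
    (single i j (1 : ℂ), (0 : ConjClasses.noncenter G → ℂ)) ∈ (terwilligerHom hG).range := by
  let E (k : ConjClasses G) : TerwAlg G := ⟨_, dualIdem_mem_terwAlg (classRep k)⟩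
  let A (k l : ConjClasses G) : TerwAlg G :=
    ⟨_, adjMat_mem_terwAlg (classRep l * (classRep k)⁻¹)⟩
  let a (k l : ConjClasses G) : ℂ := primaryMatrix G (A k l).1 k l
  have hE₁ : terwilligerHom hG (E 1) = (single 1 1 1, 0) := by
    rw [terwilligerHom_dualIdem]
    congr
    funext c
    have hc : c.1 ≠ 1 := fun h => one_notMem_noncenter (h ▸ c.2)
    simp [hc]
  have hEAE (k l : ConjClasses G) :
      (terwilligerHom hG (E k * A k l * E l)).1 = single k l (a k l) := by
    rw [map_mul, map_mul, Prod.fst_mul, Prod.fst_mul, terwilligerHom_dualIdem,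
      terwilligerHom_dualIdem, single_mul_mul_single, one_mul, mul_one]
    rfl
  have hprod : terwilligerHom hG (E i * A i 1 * E 1 * (E 1 * A 1 j * E j)) =
      (single i j (a i 1 * a 1 j), 0) := by
    refine Prod.ext ?_ ?_
    · rw [map_mul, Prod.fst_mul, hEAE, hEAE, single_mul_single_same]
    · rw [map_mul, Prod.snd_mul, map_mul (terwilligerHom hG) _ (E 1), Prod.snd_mul, hE₁]
      simp
  have hne : a i 1 * a 1 j ≠ 0 :=
    mul_ne_zero (primaryMatrix_adjMat_ne_zero i 1) (primaryMatrix_adjMat_ne_zero 1 j)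
  convert (terwilligerHom hG).range.smul_mem ⟨_, hprod⟩ (a i 1 * a 1 j)⁻¹ using 1
  rw [Prod.smul_mk, smul_zero, smul_single, smul_eq_mul, inv_mul_cancel₀ hne]

theorem terwilligerHom_surjective : Function.Surjective (terwilligerHom hG) := by
  set Φ := terwilligerHom hG
  let b := (stdBasis ℂ (ConjClasses G) (ConjClasses G)).prod
    (Pi.basisFun ℂ (ConjClasses.noncenter G))
  have hb : ∀ k, b k ∈ Subalgebra.toSubmodule Φ.range := by
    rintro (⟨i, j⟩ | c)
    · simpa [b, stdBasis_eq_single] using single_mem_range hG i j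
    · have hc : Φ ⟨_, dualIdem_mem_terwAlg (classRep c.1)⟩ - (single c.1 c.1 1, 0) =
          (0, Pi.single c 1) := by
        rw [terwilligerHom_dualIdem]
        ext c' <;> simp [Pi.single_apply, Subtype.ext_iff]
      simpa [b, ← hc] using Φ.range.sub_mem (AlgHom.mem_range_self _ _) (single_mem_range hG c c)
  intro x
  have hspan := Submodule.span_le.mpr (Set.range_subset_iff.mpr hb)
  rw [b.span_eq] at hspan
  exact (AlgHom.mem_range Φ).mp (hspan Submodule.mem_top)

variable (G) in
noncomputable def terwilligerEquiv :
    TerwAlg G ≃ₐ[ℂ] Matrix (ConjClasses G) (ConjClasses G) ℂ × (ConjClasses.noncenter G → ℂ) :=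
  AlgEquiv.ofBijective (terwilligerHom hG)
    ⟨terwilligerHom_injective hG, terwilligerHom_surjective hG⟩

end Decomposition

end Terwilliger

theorem frobAct_apply {F : Type*} [Field F] (u : Fˣ) (a : Multiplicative F) :
    frobAct F u a = Multiplicative.ofAdd ((u : F) * a.toAdd) := by
  simp [frobAct, DistribMulAction.toAddAut]
  rfl

theorem frobAct_symm_apply {F : Type*} [Field F] (u : Fˣ) (a : Multiplicative F) :
    (frobAct F u).symm a = Multiplicative.ofAdd ((u⁻¹ : Fˣ) * a.toAdd) := by
  rw [MulEquiv.symm_apply_eq, frobAct_apply]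
  simp

abbrev AffineGroup (F : Type*) [Field F] : Type _ := Multiplicative F ⋊[frobAct F] Fˣ

namespace AffineGroup

variable {F : Type*} [Field F]

theorem conj_eq (c : F) (v : Fˣ) (x : AffineGroup F) :
    (⟨.ofAdd c, v⟩ : AffineGroup F) * x * ⟨.ofAdd c, v⟩⁻¹ =
      ⟨.ofAdd (c + v * x.left.toAdd - x.right * c), x.right⟩ := by
  refine SemidirectProduct.ext ?_ ?_
  · apply Multiplicative.toAdd.injective
    simp [frobAct_apply, frobAct_symm_apply]
    field_simp
    ring
  · simp [mul_comm]

theorem isConj_iff {x y : AffineGroup F} :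
    IsConj x y ↔ (x = 1 ↔ y = 1) ∧ x.right = y.right := by
  constructor
  · intro h
    refine ⟨⟨fun hx => isConj_one_right.mp (hx ▸ h), fun hy => isConj_one_left.mp (hy ▸ h)⟩, ?_⟩
    exact isConj_iff_eq.mp (SemidirectProduct.rightHom.map_isConj h)
  rintro ⟨h1, hr⟩
  by_cases hx : x = 1
  · rw [hx, h1.mp hx]
  have hy : y ≠ 1 := fun hy => hx (h1.mpr hy)
  rw [_root_.isConj_iff]
  by_cases hu : x.right = 1
  · have ha : x.left.toAdd ≠ 0 := fun ha => hx (SemidirectProduct.ext (by simpa using ha) hu)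
    have hb : y.left.toAdd ≠ 0 := fun hb => hy (SemidirectProduct.ext (by simpa using hb) (hr ▸ hu))
    refine ⟨⟨.ofAdd 0, Units.mk0 (y.left.toAdd / x.left.toAdd) (div_ne_zero hb ha)⟩, ?_⟩
    rw [conj_eq]
    refine SemidirectProduct.ext (Multiplicative.toAdd.injective ?_) hr
    simp
    field_simp
  · have hu' : (1 : F) - x.right ≠ 0 := sub_ne_zero.mpr fun h => hu (Units.val_eq_one.mp h.symm)
    refine ⟨⟨.ofAdd ((y.left.toAdd - x.left.toAdd) / (1 - x.right)), 1⟩, ?_⟩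
    rw [conj_eq]
    refine SemidirectProduct.ext (Multiplicative.toAdd.injective ?_) hr
    simp
    field_simp
    ring

theorem mul_inv_mem_conjClass_iff (g x y : AffineGroup F) :
    y * x⁻¹ ∈ conjClass g ↔ (y = x ↔ g = 1) ∧ y.right = g.right * x.right := by
  rw [mem_conjClass_iff, ConjClasses.mk_eq_mk_iff_isConj, isConj_iff, mul_inv_eq_one,
    SemidirectProduct.mul_right, SemidirectProduct.inv_right, mul_inv_eq_iff_eq_mul]

noncomputable def classKey (g : AffineGroup F) : Option Fˣ := if g = 1 then none else some g.right

theorem isConj_iff_classKey_eq {x y : AffineGroup F} : IsConj x y ↔ classKey x = classKey y := by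
  rw [isConj_iff]
  by_cases hx : x = 1 <;> by_cases hy : y = 1 <;> simp [classKey, hx, hy]

theorem classKey_surjective : Function.Surjective (classKey (F := F)) := by
  rintro (_ | u)
  · exact ⟨1, if_pos rfl⟩
  · have hne : (⟨.ofAdd 1, u⟩ : AffineGroup F) ≠ 1 := fun h =>
      one_ne_zero (congrArg (fun z : AffineGroup F => z.left.toAdd) h)
    exact ⟨⟨.ofAdd 1, u⟩, if_neg hne⟩

theorem nat_card_conjClasses [Finite F] : Nat.card (ConjClasses (AffineGroup F)) = Nat.card F := by
  let e : ConjClasses (AffineGroup F) ≃ Option Fˣ :=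
    (Quotient.congrRight fun _ _ => isConj_iff_classKey_eq).trans
      (Setoid.quotientKerEquivOfSurjective _ classKey_surjective)
  rw [Nat.card_congr e, Finite.card_option, Nat.card_units]
  have := Nat.card_pos (α := F)
  omega

theorem exists_ne_zero_ne (hF : 2 < Nat.card F) (a : F) : ∃ b : F, b ≠ 0 ∧ b ≠ a := by
  have : Finite F := Nat.finite_of_card_ne_zero (by omega)
  have := Fintype.ofFinite F
  rw [Nat.card_eq_fintype_card, ← Finset.card_univ] at hF
  obtain ⟨b, -, hb⟩ := Finset.exists_mem_notMem_of_card_lt_card (Finset.card_le_two.trans_lt hF)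
  simp only [Finset.mem_insert, Finset.mem_singleton, not_or] at hb
  exact ⟨b, hb⟩

theorem mem_noncenter_iff (hF : 2 < Nat.card F) (c : ConjClasses (AffineGroup F)) :
    c ∈ ConjClasses.noncenter (AffineGroup F) ↔ c ≠ 1 := by
  refine ⟨fun hc h => one_notMem_noncenter (h ▸ hc), fun hc => ?_⟩
  obtain ⟨g, rfl⟩ := ConjClasses.mk_surjective c
  have hg : g ≠ 1 := fun h => hc (h ▸ rfl)
  obtain ⟨b, hb0, hb⟩ := exists_ne_zero_ne hF g.left.toAdd
  let h : AffineGroup F := ⟨.ofAdd b, g.right⟩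
  have hh : h ≠ 1 := fun h1 => hb0 (congrArg (fun z : AffineGroup F => z.left.toAdd) h1)
  have hgh : g ≠ h := fun e => hb (congrArg (fun z : AffineGroup F => z.left.toAdd) e).symm
  have hconj : IsConj g h := isConj_iff.mpr ⟨iff_of_false hg hh, rfl⟩
  exact ⟨g, ConjClasses.mem_carrier_mk, h,
    ConjClasses.mem_carrier_iff_mk_eq.mpr (ConjClasses.mk_eq_mk_iff_isConj.mpr hconj.symm), hgh⟩

variable [Fintype (AffineGroup F)]

theorem sum_ite_right_eq_zero {c : ConjClasses (AffineGroup F)} {w : AffineGroup F → ℂ}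
    (hw : w ∈ zeroSumOn c) (v : Fˣ) : ∑ z, (if z.right = v then w z else 0) = 0 := by
  obtain ⟨g, rfl⟩ := ConjClasses.mk_surjective c
  have hterm (z : AffineGroup F) :
      (if z.right = v then w z else 0) = if g.right = v then w z else 0 := by
    by_cases hz : w z = 0
    · simp [hz]
    · have hzg : IsConj z g :=
        ConjClasses.mk_eq_mk_iff_isConj.mp (by_contra fun h => hz (hw.1 z h))
      rw [(isConj_iff.mp hzg).2]
  by_cases hv : g.right = v <;> simp [hterm, hv, hw.2]

variable [DecidableEq (AffineGroup F)]

theorem nat_card_noncenter (hF : 2 < Nat.card F) :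
    Nat.card (ConjClasses.noncenter (AffineGroup F)) = Nat.card F - 1 := by
  have : Finite F := Nat.finite_of_card_ne_zero (by omega)
  have h := Nat.card_congr (Equiv.optionSubtypeNe (1 : ConjClasses (AffineGroup F)))
  rw [Finite.card_option, nat_card_conjClasses] at h
  rw [Nat.card_congr (Equiv.subtypeEquivRight (mem_noncenter_iff hF))]
  omega

theorem adjMat_actsByScalarOn (g : AffineGroup F) (c : ConjClasses (AffineGroup F)) :
    (adjMat _ (conjClass g)).ActsByScalarOn (zeroSumOn c) := by
  by_cases hg : g = 1
  · refine ⟨1, fun w _ => funext fun x => ?_⟩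
    have hmem (y : AffineGroup F) : y * x⁻¹ ∈ conjClass g ↔ y = x := by
      simp only [mul_inv_mem_conjClass_iff, hg, iff_true, SemidirectProduct.one_right, one_mul]
      exact and_iff_left_of_imp (congrArg _)
    simp [adjMat_mulVec_apply, hmem]
  by_cases hgr : g.right = 1
  · refine ⟨-1, fun w hw => funext fun x => ?_⟩
    have hterm (y : AffineGroup F) : (if y * x⁻¹ ∈ conjClass g then w y else 0) =
        (if y.right = x.right then w y else 0) - if y = x then w y else 0 := by
      by_cases hyx : y = x
      · subst hyx
        rw [mul_inv_cancel, if_neg fun h => hg (isConj_one_right.mp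
          (ConjClasses.mk_eq_mk_iff_isConj.mp (mem_conjClass_iff.mp h)))]
        simp
      · simp [mul_inv_mem_conjClass_iff, hg, hgr, hyx]
    simp [adjMat_mulVec_apply, hterm, Finset.sum_sub_distrib, sum_ite_right_eq_zero hw]
  · refine ⟨0, fun w hw => funext fun x => ?_⟩
    have hterm (y : AffineGroup F) : (if y * x⁻¹ ∈ conjClass g then w y else 0) =
        if y.right = g.right * x.right then w y else 0 := by
      refine if_congr ?_ rfl rfl
      rw [mul_inv_mem_conjClass_iff, and_iff_right_iff_imp]
      intro h
      simp only [hg, iff_false]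
      rintro rfl
      exact hgr (by simpa using h)
    simp [adjMat_mulVec_apply, hterm, sum_ite_right_eq_zero hw]

end AffineGroup

theorem stmt17_general (p r : ℕ) [Fact p.Prime] (hq : 3 ≤ p ^ r)
    [Fintype (FrobGrp p r)] [DecidableEq (FrobGrp p r)] :
    Nonempty (TerwAlg (FrobGrp p r) ≃ₐ[ℂ]
      (Matrix (Fin (p ^ r)) (Fin (p ^ r)) ℂ × (Fin (p ^ r - 1) → ℂ))) := by
  have hr : r ≠ 0 := by
    rintro rfl
    simp at hq
  have hF : Nat.card (GaloisField p r) = p ^ r := GaloisField.card p r hr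
  let eC := Finite.equivFinOfCardEq (AffineGroup.nat_card_conjClasses.trans hF)
  let eN := Finite.equivFinOfCardEq
    ((AffineGroup.nat_card_noncenter (by omega)).trans (congrArg (· - 1) hF))
  exact ⟨(terwilligerEquiv _ AffineGroup.adjMat_actsByScalarOn).trans
    (AlgEquiv.prodCongr (Matrix.reindexAlgEquiv ℂ ℂ eC) (AlgEquiv.piCongrLeft' ℂ (fun _ => ℂ) eN))⟩

/-- Theorem 5.9: Wedderburn decomposition of the Terwilliger algebra of the Frobenius
group `ℤ_p^r ⋊ ℤ_{p^r-1}`: one primary component of dimension `(p^r)²` and `p^r - 1`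
one-dimensional components. -/
theorem stmt17 (p r : ℕ) [Fact p.Prime] (hr : 1 ≤ r) (hq : 3 ≤ p ^ r)
    [Fintype (FrobGrp p r)] [DecidableEq (FrobGrp p r)] :
    Nonempty (TerwAlg (FrobGrp p r) ≃ₐ[ℂ]
      (Matrix (Fin (p ^ r)) (Fin (p ^ r)) ℂ × (Fin (p ^ r - 1) → ℂ))) :=
  stmt17_general p r hq
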